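/- Let C be an idempotent 2-copula (C * C = C under the Markov product) which is stochastically increasing in the first component. Then for all u, v ∈ (0,1): (v − C(v,v)) · ∂₂⁻C(u,v) = C(u,v) − C(u, C(v,v)), where ∂₂⁻C denotes the left-hand partial derivative in the second variable (which exists everywhere by concavity/symmetry considerations). -/

import Mathlib

/-!
Fix `w` and let `f = C(·, w)`, concave by stochastic increasingness. Take `z` with
`d = C(z, z) < z`. Idempotence gives `C(z, w) = ∫₀¹ ∂₂C(z, t) ∂₁C(t, w) dt`, where the weight
`∂₂C(z, ·) ∈ [0, 1]` has mass `d` on `[0, z]` and `∂₁C(·, w)` is decreasing. By the bathtub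
principle the integral over `[0, z]` is at most `C(d, w)`; the one over `[z, 1]` is at most
`L (z - d)` for a supergradient `L` of `f` at `z`. So the supporting line of `f` at `z` meets `f`
again at `d`, and `f` is affine on `[C(z, z), z]`.

These pieces overlap across each interval `(a, b)` on which `C(x, x) < x`, with `C(a, a) = a` and
`C(b, b) = b`, so `f` is affine on `[a, b]` for every `w`. Since `C(a, ·) = min(a, ·)` and
`C(b, ·) = min(b, ·)`, also `C(u, ·)` is affine on `[a, b]`, an interval containing `C(v, v)` and
`v`, and the identity says that the left derivative of an affine function is its slope.
-/

open MeasureTheory Set Filter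

def IsCopula (C : ℝ → ℝ → ℝ) : Prop :=
  (∀ u ∈ Icc (0:ℝ) 1, C u 0 = 0 ∧ C u 1 = u) ∧
  (∀ v ∈ Icc (0:ℝ) 1, C 0 v = 0 ∧ C 1 v = v) ∧
  (∀ u₁ u₂ v₁ v₂ : ℝ, u₁ ∈ Icc (0:ℝ) 1 → u₂ ∈ Icc (0:ℝ) 1 →
    v₁ ∈ Icc (0:ℝ) 1 → v₂ ∈ Icc (0:ℝ) 1 → u₁ ≤ u₂ → v₁ ≤ v₂ →
    0 ≤ C u₂ v₂ - C u₂ v₁ - C u₁ v₂ + C u₁ v₁)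

/-- Markov product of two copulas: (C₁ * C₂)(u,v) = ∫₀¹ ∂₂C₁(u,t) ∂₁C₂(t,v) dt. -/
noncomputable def MarkovProduct (C₁ C₂ : ℝ → ℝ → ℝ) (u v : ℝ) : ℝ :=
  ∫ t in (0:ℝ)..1, deriv (fun s => C₁ u s) t * deriv (fun s => C₂ s v) t

/-- Stochastically increasing in the first component: u ↦ C(u,v) is concave for each v. -/
def StochIncr (C : ℝ → ℝ → ℝ) : Prop :=
  ∀ v ∈ Icc (0:ℝ) 1, ConcaveOn ℝ (Icc (0:ℝ) 1) (fun u => C u v)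

/-- Stochastically decreasing in the first component: u ↦ C(u,v) is convex for each v. -/
def StochDecr (C : ℝ → ℝ → ℝ) : Prop :=
  ∀ v ∈ Icc (0:ℝ) 1, ConvexOn ℝ (Icc (0:ℝ) 1) (fun u => C u v)

open Topology

lemma deriv_mem_Icc_of_monotoneOn_of_lipschitzOnWith {f : ℝ → ℝ} {s : Set ℝ} {x : ℝ}
    (hs : s ∈ 𝓝 x) (hm : MonotoneOn f s) (hl : LipschitzOnWith 1 f s) :
    deriv f x ∈ Icc 0 1 := by
  refine ⟨?_, (le_abs_self _).trans ?_⟩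
  · rw [← derivWithin_of_mem_nhds hs]
    exact hm.derivWithin_nonneg
  · simpa using norm_deriv_le_of_lipschitzOn hs hl

lemma intervalIntegrable_mul_of_abs_le {f g : ℝ → ℝ} {a b c : ℝ} (hab : a ≤ b)
    (hf : Measurable f) (hfc : ∀ t ∈ Ioo a b, |f t| ≤ c)
    (hg : IntervalIntegrable g volume a b) :
    IntervalIntegrable (fun t => f t * g t) volume a b := by
  rw [intervalIntegrable_iff_integrableOn_Ioc_of_le hab] at hg ⊢
  refine hg.bdd_mul (c := c) hf.aestronglyMeasurable ?_
  rw [← Measure.restrict_congr_set Ioo_ae_eq_Ioc]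
  exact (ae_restrict_iff' measurableSet_Ioo).2 (ae_of_all _ hfc)

lemma intervalIntegral.integral_mono_ae_Ioo {f g : ℝ → ℝ} {a b : ℝ} (hab : a ≤ b)
    (hf : IntervalIntegrable f volume a b) (hg : IntervalIntegrable g volume a b)
    (h : ∀ᵐ t, t ∈ Ioo a b → f t ≤ g t) : ∫ t in a..b, f t ≤ ∫ t in a..b, g t := by
  refine intervalIntegral.integral_mono_ae_restrict hab hf hg ?_
  rw [← Measure.restrict_congr_set Ioo_ae_eq_Icc]
  exact (ae_restrict_iff' measurableSet_Ioo).2 h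

/-- Bathtub principle: a weight `0 ≤ g ≤ 1` of mass `d - a` gives the largest integral of `g φ`
when it sits on `[a, d]`, where `φ` is above the level `c`. -/
theorem integral_mul_le_integral_of_crossing {φ g : ℝ → ℝ} {a d z c : ℝ} (had : a ≤ d)
    (hdz : d ≤ z) (hφ : IntervalIntegrable φ volume a z) (hg : IntervalIntegrable g volume a z)
    (hgφ : IntervalIntegrable (fun t => g t * φ t) volume a z)
    (hφ_ge : ∀ᵐ t, t ∈ Ioo a d → c ≤ φ t) (hφ_le : ∀ᵐ t, t ∈ Ioo d z → φ t ≤ c)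
    (hg_le : ∀ᵐ t, t ∈ Ioo a d → g t ≤ 1) (hg_nonneg : ∀ᵐ t, t ∈ Ioo d z → 0 ≤ g t)
    (hg_int : ∫ t in a..z, g t = d - a) :
    ∫ t in a..z, g t * φ t ≤ ∫ t in a..d, φ t := by
  have hsub₁ : uIcc a d ⊆ uIcc a z := by
    rw [uIcc_of_le had, uIcc_of_le (had.trans hdz)]; exact Icc_subset_Icc_right hdz
  have hsub₂ : uIcc d z ⊆ uIcc a z := by
    rw [uIcc_of_le hdz, uIcc_of_le (had.trans hdz)]; exact Icc_subset_Icc_left had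
  have hc_sub : IntervalIntegrable (fun t => c * (1 - g t)) volume a d :=
    (intervalIntegrable_const.sub (hg.mono_set hsub₁)).const_mul c
  have hleft : ∫ t in a..d, g t * φ t ≤ ∫ t in a..d, (φ t - c * (1 - g t)) := by
    refine intervalIntegral.integral_mono_ae_Ioo had (hgφ.mono_set hsub₁)
      ((hφ.mono_set hsub₁).sub hc_sub) ?_
    filter_upwards [hφ_ge, hg_le] with t h₁ h₂ ht
    nlinarith [h₁ ht, h₂ ht]
  have hright : ∫ t in d..z, g t * φ t ≤ ∫ t in d..z, c * g t := by
    refine intervalIntegral.integral_mono_ae_Ioo hdz (hgφ.mono_set hsub₂)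
      ((hg.mono_set hsub₂).const_mul c) ?_
    filter_upwards [hφ_le, hg_nonneg] with t h₁ h₂ ht
    nlinarith [h₁ ht, h₂ ht]
  have hg_split := intervalIntegral.integral_add_adjacent_intervals (hg.mono_set hsub₁)
    (hg.mono_set hsub₂)
  rw [← intervalIntegral.integral_add_adjacent_intervals (hgφ.mono_set hsub₁)
    (hgφ.mono_set hsub₂)]
  rw [intervalIntegral.integral_sub (hφ.mono_set hsub₁) hc_sub,
    intervalIntegral.integral_const_mul, intervalIntegral.integral_sub intervalIntegrable_const
    (hg.mono_set hsub₁), intervalIntegral.integral_const, smul_eq_mul] at hleft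
  rw [intervalIntegral.integral_const_mul] at hright
  have hmass : c * ((d - a) * 1 - ∫ t in a..d, g t) = c * ∫ t in d..z, g t := by
    rw [← hg_int, ← hg_split]; ring
  linarith

def IsAffineOn (f : ℝ → ℝ) (s : Set ℝ) : Prop := ∃ k c : ℝ, ∀ x ∈ s, f x = k * x + c

lemma IsAffineOn.mono {f : ℝ → ℝ} {s t : Set ℝ} (hf : IsAffineOn f s) (hts : t ⊆ s) :
    IsAffineOn f t :=
  let ⟨k, c, h⟩ := hf
  ⟨k, c, fun x hx => h x (hts hx)⟩

lemma hasDerivAt_of_eq_affine {f : ℝ → ℝ} {s : Set ℝ} {k c x : ℝ}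
    (hf : ∀ y ∈ s, f y = k * y + c) (hs : s ∈ 𝓝 x) : HasDerivAt f k x := by
  have : HasDerivAt (fun y => k * y + c) k x := by
    simpa using ((hasDerivAt_id x).const_mul k).add_const c
  exact this.congr_of_eventuallyEq (Filter.eventually_of_mem hs hf)

lemma derivWithin_Iic_of_eq_affine {f : ℝ → ℝ} {a v k c : ℝ} (hav : a < v)
    (hf : ∀ x ∈ Icc a v, f x = k * x + c) : derivWithin f (Iic v) v = k := by
  have hfeq : f =ᶠ[𝓝[≤] v] fun x => k * x + c :=
    Filter.eventually_of_mem (Icc_mem_nhdsLE hav) hf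
  have : HasDerivWithinAt (fun x => k * x + c) k (Iic v) v := by
    simpa using (((hasDerivAt_id v).const_mul k).add_const c).hasDerivWithinAt
  exact (this.congr_of_eventuallyEq hfeq (hf v ⟨hav.le, le_rfl⟩)).derivWithin
    (uniqueDiffWithinAt_Iic v)

theorem isAffineOn_Icc_of_locally {f : ℝ → ℝ} {a b : ℝ} (hab : a < b)
    (hf : ContinuousOn f (Icc a b)) (h : ∀ m ∈ Ioo a b, ∃ s ∈ 𝓝 m, IsAffineOn f s) :
    IsAffineOn f (Icc a b) := by
  have hderiv : ∀ m ∈ Ioo a b, ∃ k, ∀ᶠ y in 𝓝 m, HasDerivAt f k y := by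
    intro m hm
    obtain ⟨s, hs, k, c, hkc⟩ := h m hm
    exact ⟨k, Filter.Eventually.eventually_nhds hs |>.mono fun y hy =>
      hasDerivAt_of_eq_affine hkc hy⟩
  have hdiff : DifferentiableOn ℝ f (Ioo a b) := fun m hm =>
    (hderiv m hm).choose_spec.self_of_nhds.differentiableAt.differentiableWithinAt
  have hderiv₂ : ∀ m ∈ Ioo a b, HasDerivAt (deriv f) 0 m := fun m hm =>
    (hasDerivAt_const m _).congr_of_eventuallyEq
      ((hderiv m hm).choose_spec.mono fun y hy => hy.deriv)
  have hconst : ∀ x ∈ Ioo a b, ∀ y ∈ Ioo a b, deriv f x = deriv f y :=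
    fun x hx y hy => isOpen_Ioo.is_const_of_deriv_eq_zero isPreconnected_Ioo
      (fun m hm => (hderiv₂ m hm).differentiableAt.differentiableWithinAt)
      (fun m hm => (hderiv₂ m hm).deriv) hx hy
  obtain ⟨ξ₀, hξ₀, -⟩ := exists_deriv_eq_slope f hab hf hdiff
  refine ⟨deriv f ξ₀, f a - deriv f ξ₀ * a, fun x hx => ?_⟩
  rcases eq_or_lt_of_le hx.1 with rfl | hax
  · ring
  obtain ⟨ξ, hξ, hξk⟩ := exists_deriv_eq_slope f hax (hf.mono (Icc_subset_Icc_right hx.2))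
    (hdiff.mono (Ioo_subset_Ioo_right hx.2))
  rw [hconst ξ₀ hξ₀ ξ ⟨hξ.1, hξ.2.trans_le hx.2⟩, hξk]
  field_simp
  ring

section Concave

variable {S : Set ℝ} {f : ℝ → ℝ} {p c : ℝ}

lemma ConcaveOn.exists_supergradient (hf : ConcaveOn ℝ S f) (hp : p ∈ interior S) :
    ∃ c, ∀ x ∈ S, f x ≤ f p + c * (x - p) := by
  refine ⟨-derivWithin (-f) (Iio p) p, fun x hx => ?_⟩
  rcases lt_trichotomy x p with hxp | rfl | hpx
  · have := hf.neg.slope_le_leftDeriv_of_mem_interior hx hp hxp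
    rw [slope_def_field, div_le_iff₀ (sub_pos.2 hxp)] at this
    simp only [Pi.neg_apply] at this
    linarith
  · simp
  · have := (hf.neg.leftDeriv_le_rightDeriv_of_mem_interior hp).trans
      (hf.neg.rightDeriv_le_slope_of_mem_interior hp hx hpx)
    rw [slope_def_field, le_div_iff₀ (sub_pos.2 hpx)] at this
    simp only [Pi.neg_apply] at this
    linarith

lemma ConcaveOn.le_deriv_of_supergradient (hf : ConcaveOn ℝ S f)
    (hc : ∀ x ∈ S, f x ≤ f p + c * (x - p)) (hp : p ∈ S) {t : ℝ} (ht : t ∈ S) (htp : t < p)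
    (hd : DifferentiableAt ℝ f t) : c ≤ deriv f t := by
  have := hf.neg.deriv_le_slope ht hp htp hd.neg
  rw [deriv.neg, slope_def_field, le_div_iff₀ (sub_pos.2 htp)] at this
  simp only [Pi.neg_apply] at this
  nlinarith [hc t ht]

lemma ConcaveOn.deriv_le_of_supergradient (hf : ConcaveOn ℝ S f)
    (hc : ∀ x ∈ S, f x ≤ f p + c * (x - p)) (hp : p ∈ S) {t : ℝ} (ht : t ∈ S) (hpt : p < t)
    (hd : DifferentiableAt ℝ f t) : deriv f t ≤ c := by
  have := hf.neg.slope_le_deriv hp ht hpt hd.neg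
  rw [deriv.neg, slope_def_field, div_le_iff₀ (sub_pos.2 hpt)] at this
  simp only [Pi.neg_apply] at this
  nlinarith [hc t ht]

lemma ConcaveOn.isAffineOn_Icc_of_supergradient (hf : ConcaveOn ℝ S f) {q : ℝ}
    (hc : ∀ x ∈ S, f x ≤ f q + c * (x - q)) (hp : p ∈ S) (hq : q ∈ S)
    (hpq : f q - f p ≤ c * (q - p)) : IsAffineOn f (Icc p q) := by
  refine ⟨c, f q - c * q, fun x hx => ?_⟩
  have hxS : x ∈ S := hf.1.ordConnected.out hp hq hx
  refine le_antisymm (by linarith [hc x hxS]) ?_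
  rcases eq_or_lt_of_le hx.1 with rfl | hpx
  · linarith
  rcases eq_or_lt_of_le hx.2 with rfl | hxq
  · linarith
  have := hf.neg.secant_mono_aux1 hp hq hpx hxq
  simp only [Pi.neg_apply] at this
  nlinarith

end Concave

namespace IsCopula

variable {C : ℝ → ℝ → ℝ}

lemma mono_right (hC : IsCopula C) {u v₁ v₂ : ℝ} (hu : u ∈ Icc (0:ℝ) 1)
    (hv₁ : v₁ ∈ Icc (0:ℝ) 1) (hv₂ : v₂ ∈ Icc (0:ℝ) 1) (h : v₁ ≤ v₂) : C u v₁ ≤ C u v₂ := by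
  have := hC.2.2 0 u v₁ v₂ unitInterval.zero_mem hu hv₁ hv₂ hu.1 h
  linarith [(hC.2.1 v₁ hv₁).1, (hC.2.1 v₂ hv₂).1]

lemma mono_left (hC : IsCopula C) {u₁ u₂ v : ℝ} (hv : v ∈ Icc (0:ℝ) 1)
    (hu₁ : u₁ ∈ Icc (0:ℝ) 1) (hu₂ : u₂ ∈ Icc (0:ℝ) 1) (h : u₁ ≤ u₂) : C u₁ v ≤ C u₂ v := by
  have := hC.2.2 u₁ u₂ 0 v hu₁ hu₂ unitInterval.zero_mem hv h hv.1
  linarith [(hC.1 u₁ hu₁).1, (hC.1 u₂ hu₂).1]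

lemma sub_le_right (hC : IsCopula C) {u v₁ v₂ : ℝ} (hu : u ∈ Icc (0:ℝ) 1)
    (hv₁ : v₁ ∈ Icc (0:ℝ) 1) (hv₂ : v₂ ∈ Icc (0:ℝ) 1) (h : v₁ ≤ v₂) :
    C u v₂ - C u v₁ ≤ v₂ - v₁ := by
  have := hC.2.2 u 1 v₁ v₂ hu unitInterval.one_mem hv₁ hv₂ hu.2 h
  linarith [(hC.2.1 v₁ hv₁).2, (hC.2.1 v₂ hv₂).2]

lemma sub_le_left (hC : IsCopula C) {u₁ u₂ v : ℝ} (hv : v ∈ Icc (0:ℝ) 1)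
    (hu₁ : u₁ ∈ Icc (0:ℝ) 1) (hu₂ : u₂ ∈ Icc (0:ℝ) 1) (h : u₁ ≤ u₂) :
    C u₂ v - C u₁ v ≤ u₂ - u₁ := by
  have := hC.2.2 u₁ u₂ v 1 hu₁ hu₂ hv unitInterval.one_mem h hv.2
  linarith [(hC.1 u₁ hu₁).2, (hC.1 u₂ hu₂).2]

lemma nonneg (hC : IsCopula C) {u v : ℝ} (hu : u ∈ Icc (0:ℝ) 1) (hv : v ∈ Icc (0:ℝ) 1) :
    0 ≤ C u v :=
  (hC.2.1 v hv).1 ▸ hC.mono_left hv unitInterval.zero_mem hu hu.1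

lemma le_left (hC : IsCopula C) {u v : ℝ} (hu : u ∈ Icc (0:ℝ) 1) (hv : v ∈ Icc (0:ℝ) 1) :
    C u v ≤ u :=
  (hC.mono_right hu hv unitInterval.one_mem hv.2).trans_eq (hC.1 u hu).2

lemma le_right (hC : IsCopula C) {u v : ℝ} (hu : u ∈ Icc (0:ℝ) 1) (hv : v ∈ Icc (0:ℝ) 1) :
    C u v ≤ v :=
  (hC.mono_left hv hu unitInterval.one_mem hu.2).trans_eq (hC.2.1 v hv).2

lemma diag_mono (hC : IsCopula C) {x y : ℝ} (hx : x ∈ Icc (0:ℝ) 1) (hy : y ∈ Icc (0:ℝ) 1)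
    (h : x ≤ y) : C x x ≤ C y y :=
  (hC.mono_left hx hx hy h).trans (hC.mono_right hy hx hy h)

lemma eq_min_right_of_diag_eq (hC : IsCopula C) {a y : ℝ} (ha : a ∈ Icc (0:ℝ) 1)
    (haa : C a a = a) (hy : y ∈ Icc (0:ℝ) 1) : C a y = min a y := by
  rcases le_total y a with h | h
  · rw [min_eq_right h]
    linarith [hC.le_right ha hy, hC.sub_le_right ha hy ha h]
  · rw [min_eq_left h]
    linarith [hC.le_left ha hy, hC.mono_right ha ha hy h]

lemma eq_min_left_of_diag_eq (hC : IsCopula C) {a y : ℝ} (ha : a ∈ Icc (0:ℝ) 1)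
    (haa : C a a = a) (hy : y ∈ Icc (0:ℝ) 1) : C y a = min y a := by
  rcases le_total y a with h | h
  · rw [min_eq_left h]
    linarith [hC.le_left hy ha, hC.sub_le_left ha hy ha h]
  · rw [min_eq_right h]
    linarith [hC.le_right hy ha, hC.mono_left ha ha hy h]

lemma lipschitzOnWith_right (hC : IsCopula C) {u : ℝ} (hu : u ∈ Icc (0:ℝ) 1) :
    LipschitzOnWith 1 (fun v => C u v) (Icc 0 1) := by
  refine LipschitzOnWith.of_le_add fun x hx y hy => ?_
  rw [Real.dist_eq]
  rcases le_total x y with h | h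
  · linarith [hC.mono_right hu hx hy h, abs_nonneg (x - y)]
  · linarith [hC.sub_le_right hu hy hx h, le_abs_self (x - y)]

lemma lipschitzOnWith_left (hC : IsCopula C) {v : ℝ} (hv : v ∈ Icc (0:ℝ) 1) :
    LipschitzOnWith 1 (fun u => C u v) (Icc 0 1) := by
  refine LipschitzOnWith.of_le_add fun x hx y hy => ?_
  rw [Real.dist_eq]
  rcases le_total x y with h | h
  · linarith [hC.mono_left hv hx hy h, abs_nonneg (x - y)]
  · linarith [hC.sub_le_left hv hy hx h, le_abs_self (x - y)]

lemma continuousOn_diag (hC : IsCopula C) : ContinuousOn (fun x => C x x) (Icc 0 1) := by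
  refine (LipschitzOnWith.of_dist_le_mul (K := 2) fun x hx y hy => ?_).continuousOn
  calc dist (C x x) (C y y) ≤ dist (C x x) (C y x) + dist (C y x) (C y y) := dist_triangle _ _ _
    _ ≤ 1 * dist x y + 1 * dist x y :=
      add_le_add ((hC.lipschitzOnWith_left hx).dist_le_mul x hx y hy)
        ((hC.lipschitzOnWith_right hy).dist_le_mul x hx y hy)
    _ = 2 * dist x y := by norm_num; ring

lemma absolutelyContinuousOnInterval_right (hC : IsCopula C) {u x y : ℝ}
    (hu : u ∈ Icc (0:ℝ) 1) (hx : x ∈ Icc (0:ℝ) 1) (hy : y ∈ Icc (0:ℝ) 1) :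
    AbsolutelyContinuousOnInterval (fun v => C u v) x y :=
  ((hC.lipschitzOnWith_right hu).mono (uIcc_subset_Icc hx hy)).absolutelyContinuousOnInterval

lemma absolutelyContinuousOnInterval_left (hC : IsCopula C) {v x y : ℝ}
    (hv : v ∈ Icc (0:ℝ) 1) (hx : x ∈ Icc (0:ℝ) 1) (hy : y ∈ Icc (0:ℝ) 1) :
    AbsolutelyContinuousOnInterval (fun u => C u v) x y :=
  ((hC.lipschitzOnWith_left hv).mono (uIcc_subset_Icc hx hy)).absolutelyContinuousOnInterval

lemma deriv_right_mem_Icc (hC : IsCopula C) {u t : ℝ} (hu : u ∈ Icc (0:ℝ) 1)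
    (ht : t ∈ Ioo (0:ℝ) 1) : deriv (fun v => C u v) t ∈ Icc 0 1 :=
  deriv_mem_Icc_of_monotoneOn_of_lipschitzOnWith (Icc_mem_nhds ht.1 ht.2)
    (fun _ hx _ hy h => hC.mono_right hu hx hy h) (hC.lipschitzOnWith_right hu)

lemma deriv_left_mem_Icc (hC : IsCopula C) {v t : ℝ} (hv : v ∈ Icc (0:ℝ) 1)
    (ht : t ∈ Ioo (0:ℝ) 1) : deriv (fun u => C u v) t ∈ Icc 0 1 :=
  deriv_mem_Icc_of_monotoneOn_of_lipschitzOnWith (Icc_mem_nhds ht.1 ht.2)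
    (fun _ hx _ hy h => hC.mono_left hv hx hy h) (hC.lipschitzOnWith_left hv)

lemma ae_differentiableAt_left (hC : IsCopula C) {v : ℝ} (hv : v ∈ Icc (0:ℝ) 1) :
    ∀ᵐ t, t ∈ Icc (0:ℝ) 1 → DifferentiableAt ℝ (fun u => C u v) t := by
  simpa [uIcc_of_le zero_le_one] using (hC.absolutelyContinuousOnInterval_left hv
    unitInterval.zero_mem unitInterval.one_mem).ae_differentiableAt

lemma intervalIntegrable_deriv_mul_deriv (hC : IsCopula C) {z w : ℝ} (hz : z ∈ Icc (0:ℝ) 1)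
    (hw : w ∈ Icc (0:ℝ) 1) :
    IntervalIntegrable (fun t => deriv (fun v => C z v) t * deriv (fun u => C u w) t)
      volume 0 1 :=
  intervalIntegrable_mul_of_abs_le zero_le_one (measurable_deriv _)
    (fun t ht => abs_le.2 ⟨by linarith [(hC.deriv_right_mem_Icc hz ht).1],
      (hC.deriv_right_mem_Icc hz ht).2⟩)
    (hC.absolutelyContinuousOnInterval_left hw unitInterval.zero_mem
      unitInterval.one_mem).intervalIntegrable_deriv

lemma exists_deriv_left_crossing (hC : IsCopula C) (hSI : StochIncr C) {w d : ℝ}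
    (hw : w ∈ Icc (0:ℝ) 1) (hd : d ∈ Ico (0:ℝ) 1) :
    ∃ c, (∀ᵐ t, t ∈ Ioo 0 d → c ≤ deriv (fun u => C u w) t) ∧
      ∀ᵐ t, t ∈ Ioo d 1 → deriv (fun u => C u w) t ≤ c := by
  rcases eq_or_lt_of_le hd.1 with rfl | hd₀
  · exact ⟨1, by simp, ae_of_all _ fun t ht => (hC.deriv_left_mem_Icc hw ht).2⟩
  have hdI : d ∈ Icc (0:ℝ) 1 := Ico_subset_Icc_self hd
  obtain ⟨c, hc⟩ := (hSI w hw).exists_supergradient (by rw [interior_Icc]; exact ⟨hd₀, hd.2⟩)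
  refine ⟨c, ?_, ?_⟩ <;> filter_upwards [hC.ae_differentiableAt_left hw] with t ht_diff ht
  · have htI : t ∈ Icc (0:ℝ) 1 := ⟨ht.1.le, ht.2.le.trans hdI.2⟩
    exact (hSI w hw).le_deriv_of_supergradient hc hdI htI ht.2 (ht_diff htI)
  · have htI : t ∈ Icc (0:ℝ) 1 := ⟨hdI.1.trans ht.1.le, ht.2.le⟩
    exact (hSI w hw).deriv_le_of_supergradient hc hdI htI ht.1 (ht_diff htI)

lemma integral_deriv_mul_deriv_le_apply_diag (hC : IsCopula C) (hSI : StochIncr C) {z w : ℝ}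
    (hz : z ∈ Ioo (0:ℝ) 1) (hw : w ∈ Icc (0:ℝ) 1) :
    ∫ t in (0:ℝ)..z, deriv (fun v => C z v) t * deriv (fun u => C u w) t ≤ C (C z z) w := by
  have h₀ := unitInterval.zero_mem
  have hzI : z ∈ Icc (0:ℝ) 1 := Ioo_subset_Icc_self hz
  have hd₀ : 0 ≤ C z z := hC.nonneg hzI hzI
  have hdz : C z z ≤ z := hC.le_right hzI hzI
  have hdI : C z z ∈ Icc (0:ℝ) 1 := ⟨hd₀, hdz.trans hzI.2⟩
  have hG := hC.absolutelyContinuousOnInterval_right hzI h₀ hzI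
  have hG_mem : ∀ t ∈ Ioo (0:ℝ) 1, deriv (fun v => C z v) t ∈ Icc 0 1 :=
    fun t ht => hC.deriv_right_mem_Icc hzI ht
  obtain ⟨c, hc₁, hc₂⟩ := hC.exists_deriv_left_crossing hSI hw ⟨hd₀, hdz.trans_lt hz.2⟩
  have := integral_mul_le_integral_of_crossing hd₀ hdz
    (hC.absolutelyContinuousOnInterval_left hw h₀ hzI).intervalIntegrable_deriv
    hG.intervalIntegrable_deriv
    ((hC.intervalIntegrable_deriv_mul_deriv hzI hw).mono_set
      (uIcc_subset_uIcc_left (by rwa [uIcc_of_le zero_le_one]))) hc₁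
    (by filter_upwards [hc₂] with t h ht using h ⟨ht.1, ht.2.trans hz.2⟩)
    (ae_of_all _ fun t ht => (hG_mem t ⟨ht.1, ht.2.trans_le hdI.2⟩).2)
    (ae_of_all _ fun t ht => (hG_mem t ⟨hd₀.trans_lt ht.1, ht.2.trans hz.2⟩).1)
    (by rw [hG.integral_deriv_eq_sub, (hC.1 z hzI).1])
  rwa [(hC.absolutelyContinuousOnInterval_left hw h₀ hdI).integral_deriv_eq_sub,
    (hC.2.1 w hw).1, sub_zero] at this

lemma integral_deriv_mul_deriv_le_mul_sub_diag (hC : IsCopula C) {z w L : ℝ}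
    (hz : z ∈ Ioo (0:ℝ) 1) (hw : w ∈ Icc (0:ℝ) 1)
    (hL : ∀ᵐ t, t ∈ Ioo z 1 → deriv (fun u => C u w) t ≤ L) :
    ∫ t in z..1, deriv (fun v => C z v) t * deriv (fun u => C u w) t ≤ L * (z - C z z) := by
  have hzI : z ∈ Icc (0:ℝ) 1 := Ioo_subset_Icc_self hz
  have hG := hC.absolutelyContinuousOnInterval_right hzI hzI unitInterval.one_mem
  calc _ ≤ ∫ t in z..1, L * deriv (fun v => C z v) t :=
        intervalIntegral.integral_mono_ae_Ioo hz.2.le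
          ((hC.intervalIntegrable_deriv_mul_deriv hzI hw).mono_set
            (uIcc_subset_uIcc_right (by rwa [uIcc_of_le zero_le_one])))
          (hG.intervalIntegrable_deriv.const_mul L) (by
            filter_upwards [hL] with t h ht
            nlinarith [h ht, (hC.deriv_right_mem_Icc hzI ⟨hz.1.trans ht.1, ht.2⟩).1])
    _ = L * (z - C z z) := by
        rw [intervalIntegral.integral_const_mul, hG.integral_deriv_eq_sub, (hC.1 z hzI).2]

lemma sub_le_of_idempotent (hC : IsCopula C)
    (hid : ∀ u ∈ Icc (0:ℝ) 1, ∀ v ∈ Icc (0:ℝ) 1, MarkovProduct C C u v = C u v)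
    (hSI : StochIncr C) {z w L : ℝ} (hz : z ∈ Ioo (0:ℝ) 1) (hw : w ∈ Icc (0:ℝ) 1)
    (hL : ∀ᵐ t, t ∈ Ioo z 1 → deriv (fun u => C u w) t ≤ L) :
    C z w - C (C z z) w ≤ L * (z - C z z) := by
  have hzI : z ∈ Icc (0:ℝ) 1 := Ioo_subset_Icc_self hz
  have hzI' : z ∈ uIcc (0:ℝ) 1 := by rwa [uIcc_of_le zero_le_one]
  have hGH := hC.intervalIntegrable_deriv_mul_deriv hzI hw
  have hsplit := intervalIntegral.integral_add_adjacent_intervals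
    (hGH.mono_set (uIcc_subset_uIcc_left hzI')) (hGH.mono_set (uIcc_subset_uIcc_right hzI'))
  have hidem := hid z hzI w hw
  unfold MarkovProduct at hidem
  linarith [hC.integral_deriv_mul_deriv_le_apply_diag hSI hz hw,
    hC.integral_deriv_mul_deriv_le_mul_sub_diag hz hw hL]

lemma isAffineOn_left_Icc_diag (hC : IsCopula C)
    (hid : ∀ u ∈ Icc (0:ℝ) 1, ∀ v ∈ Icc (0:ℝ) 1, MarkovProduct C C u v = C u v)
    (hSI : StochIncr C) {z w : ℝ} (hz : z ∈ Ioo (0:ℝ) 1) (hw : w ∈ Icc (0:ℝ) 1) :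
    IsAffineOn (fun x => C x w) (Icc (C z z) z) := by
  have hzI : z ∈ Icc (0:ℝ) 1 := Ioo_subset_Icc_self hz
  obtain ⟨L, hL⟩ := (hSI w hw).exists_supergradient (by rwa [interior_Icc])
  refine (hSI w hw).isAffineOn_Icc_of_supergradient hL
    ⟨hC.nonneg hzI hzI, (hC.le_right hzI hzI).trans hzI.2⟩ hzI
    (hC.sub_le_of_idempotent hid hSI hz hw ?_)
  filter_upwards [hC.ae_differentiableAt_left hw] with t ht_diff ht
  have htI : t ∈ Icc (0:ℝ) 1 := ⟨hz.1.le.trans ht.1.le, ht.2.le⟩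
  exact (hSI w hw).deriv_le_of_supergradient hL hzI htI ht.1 (ht_diff htI)

lemma exists_diag_fixed_around (hC : IsCopula C) {v : ℝ} (hv : v ∈ Icc (0:ℝ) 1)
    (hdv : C v v < v) :
    ∃ a b, a < v ∧ v < b ∧ a ∈ Icc (0:ℝ) 1 ∧ b ∈ Icc (0:ℝ) 1 ∧ C a a = a ∧ C b b = b ∧
      ∀ m ∈ Ioo a b, C m m < m := by
  set F := Icc (0:ℝ) 1 ∩ (fun x => C x x - x) ⁻¹' {0}
  have hmemF : ∀ {x}, x ∈ F ↔ x ∈ Icc (0:ℝ) 1 ∧ C x x = x := by simp [F, sub_eq_zero]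
  have hFc : IsClosed F :=
    (hC.continuousOn_diag.sub continuousOn_id).preimage_isClosed_of_isClosed isClosed_Icc
      isClosed_singleton
  have hvF : v ∉ F := fun h => hdv.ne (hmemF.1 h).2
  have haF : sSup (F ∩ Icc 0 v) ∈ F ∩ Icc 0 v :=
    (hFc.inter isClosed_Icc).csSup_mem
      ⟨0, hmemF.2 ⟨unitInterval.zero_mem, (hC.2.1 0 unitInterval.zero_mem).1⟩,
        left_mem_Icc.2 hv.1⟩
      ⟨v, fun x hx => hx.2.2⟩
  have hbF : sInf (F ∩ Icc v 1) ∈ F ∩ Icc v 1 :=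
    (hFc.inter isClosed_Icc).csInf_mem
      ⟨1, hmemF.2 ⟨unitInterval.one_mem, (hC.2.1 1 unitInterval.one_mem).2⟩,
        right_mem_Icc.2 hv.2⟩
      ⟨v, fun x hx => hx.2.1⟩
  refine ⟨_, _, haF.2.2.lt_of_ne fun h => hvF (h ▸ haF.1),
    hbF.2.1.lt_of_ne' fun h => hvF (h ▸ hbF.1), (hmemF.1 haF.1).1, (hmemF.1 hbF.1).1,
    (hmemF.1 haF.1).2, (hmemF.1 hbF.1).2, fun m hm => ?_⟩
  have hmI : m ∈ Icc (0:ℝ) 1 :=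
    ⟨(hmemF.1 haF.1).1.1.trans hm.1.le, hm.2.le.trans (hmemF.1 hbF.1).1.2⟩
  refine (hC.le_right hmI hmI).lt_of_ne fun h => ?_
  rcases le_total m v with hmv | hvm
  · exact hm.1.not_ge (le_csSup ⟨v, fun x hx => hx.2.2⟩ ⟨hmemF.2 ⟨hmI, h⟩, hmI.1, hmv⟩)
  · exact hm.2.not_ge (csInf_le ⟨v, fun x hx => hx.2.1⟩ ⟨hmemF.2 ⟨hmI, h⟩, hvm, hmI.2⟩)

lemma isAffineOn_left_of_diag_lt (hC : IsCopula C)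
    (hid : ∀ u ∈ Icc (0:ℝ) 1, ∀ v ∈ Icc (0:ℝ) 1, MarkovProduct C C u v = C u v)
    (hSI : StochIncr C) {a b w : ℝ} (hab : a < b) (ha : a ∈ Icc (0:ℝ) 1)
    (hb : b ∈ Icc (0:ℝ) 1) (hgap : ∀ m ∈ Ioo a b, C m m < m) (hw : w ∈ Icc (0:ℝ) 1) :
    IsAffineOn (fun x => C x w) (Icc a b) := by
  refine isAffineOn_Icc_of_locally hab
    ((hC.lipschitzOnWith_left hw).continuousOn.mono (Icc_subset_Icc ha.1 hb.2)) fun m hm => ?_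
  have hm₀ : 0 < m := ha.1.trans_lt hm.1
  have hdiag : ∀ᶠ z in 𝓝 m, C z z < m :=
    (hC.continuousOn_diag.continuousAt (Icc_mem_nhds hm₀ (hm.2.trans_le hb.2))).eventually
      (eventually_lt_nhds (hgap m hm))
  obtain ⟨z, hzd, hmz, hzb⟩ :=
    ((hdiag.filter_mono nhdsWithin_le_nhds).and (Ioo_mem_nhdsGT hm.2)).exists
  exact ⟨Ioo (C z z) z, Ioo_mem_nhds hzd hmz,
    (hC.isAffineOn_left_Icc_diag hid hSI ⟨hm₀.trans hmz, hzb.trans_le hb.2⟩ hw).mono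
      Ioo_subset_Icc_self⟩

lemma isAffineOn_right_of_diag_eq (hC : IsCopula C) {a b u : ℝ} (hab : a < b)
    (ha : a ∈ Icc (0:ℝ) 1) (hb : b ∈ Icc (0:ℝ) 1) (haa : C a a = a) (hbb : C b b = b)
    (hleft : ∀ w ∈ Icc (0:ℝ) 1, IsAffineOn (fun x => C x w) (Icc a b))
    (hu : u ∈ Icc (0:ℝ) 1) : IsAffineOn (fun t => C u t) (Icc a b) := by
  have hsub : Icc a b ⊆ Icc 0 1 := Icc_subset_Icc ha.1 hb.2
  rcases le_or_gt u a with hua | hau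
  · refine ⟨0, u, fun t ht => le_antisymm (by simpa using hC.le_left hu (hsub ht)) ?_⟩
    have := hC.mono_right hu ha (hsub ht) ht.1
    rw [hC.eq_min_left_of_diag_eq ha haa hu, min_eq_left hua] at this
    simpa using this
  rcases le_or_gt b u with hbu | hub
  · refine ⟨1, 0, fun t ht => le_antisymm (by simpa using hC.le_right hu (hsub ht)) ?_⟩
    have := hC.mono_left (hsub ht) hb hu hbu
    rw [hC.eq_min_right_of_diag_eq hb hbb (hsub ht), min_eq_right ht.2] at this
    simpa using this
  refine ⟨(u - a) / (b - a), a - a * (u - a) / (b - a), fun t ht => show C u t = _ from ?_⟩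
  obtain ⟨k, c, hkc⟩ : ∃ k c : ℝ, ∀ x ∈ Icc a b, C x t = k * x + c := hleft t (hsub ht)
  have hat := hkc a (left_mem_Icc.2 hab.le)
  have hbt := hkc b (right_mem_Icc.2 hab.le)
  rw [hC.eq_min_right_of_diag_eq ha haa (hsub ht), min_eq_left ht.1] at hat
  rw [hC.eq_min_right_of_diag_eq hb hbb (hsub ht), min_eq_right ht.2] at hbt
  rw [hkc u ⟨hau.le, hub.le⟩]
  field_simp [(sub_pos.2 hab).ne']
  linear_combination (u - b) * hat + (a - u) * hbt

end IsCopula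

theorem tangent_property (C : ℝ → ℝ → ℝ) (hC : IsCopula C)
    (hid : ∀ u ∈ Icc (0:ℝ) 1, ∀ v ∈ Icc (0:ℝ) 1, MarkovProduct C C u v = C u v)
    (hSI : StochIncr C) :
    ∀ u ∈ Ioo (0:ℝ) 1, ∀ v ∈ Ioo (0:ℝ) 1,
      (v - C v v) * derivWithin (fun t => C u t) (Iic v) v
        = C u v - C u (C v v) := by
  intro u hu v hv
  have hvI : v ∈ Icc (0:ℝ) 1 := Ioo_subset_Icc_self hv
  rcases (hC.le_right hvI hvI).eq_or_lt with hdv | hdv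
  · rw [hdv, sub_self, zero_mul, sub_self]
  obtain ⟨a, b, hav, hvb, ha, hb, haa, hbb, hgap⟩ := hC.exists_diag_fixed_around hvI hdv
  have hab : a < b := hav.trans hvb
  obtain ⟨k, c, hkc⟩ : ∃ k c : ℝ, ∀ t ∈ Icc a b, C u t = k * t + c :=
    hC.isAffineOn_right_of_diag_eq hab ha hb haa hbb
      (fun w hw => hC.isAffineOn_left_of_diag_lt hid hSI hab ha hb hgap hw)
      (Ioo_subset_Icc_self hu)
  have had : a ≤ C v v := haa ▸ hC.diag_mono ha hvI hav.le
  rw [derivWithin_Iic_of_eq_affine hav fun x hx => hkc x ⟨hx.1, hx.2.trans hvb.le⟩,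
    hkc v ⟨hav.le, hvb.le⟩, hkc (C v v) ⟨had, hdv.le.trans hvb.le⟩]
  ring
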